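/- Let X be a nonempty finite set, N ≥ 1, p_0 and p_1 probability mass functions on X with full support, and q^ref a Markov process on X^{N+2} with full support. Let q^0 ∈ Π_N(p_0, p_1) have full support on X^{N+2}, and define the D-IMF sequence by q^{2l+1} = proj_R(q^{2l}) (reciprocal projection with respect to q^ref) and q^{2l+2} = proj_M(q^{2l+1}) (Markovian projection). Let q* be the unique minimizer of KL(q || q^ref) over Π_N(p_0, p_1). Then every iterate q^l belongs to Π_N(p_0, p_1), and lim_{l→∞} KL(q^l || q*) = 0. -/

import Mathlib

open Finset

/-- A probability mass function on a finite type. -/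
def IsPMF {Z : Type*} [Fintype Z] (p : Z → ℝ) : Prop :=
  (∀ z, 0 ≤ p z) ∧ ∑ z, p z = 1

/-- KL divergence between two pmfs on a finite type (with `0 log 0 := 0`,
which is automatic since `0 * log (0/b) = 0`). -/
noncomputable def KLd {Z : Type*} [Fintype Z] (a b : Z → ℝ) : ℝ :=
  ∑ z, a z * Real.log (a z / b z)

/-- Trajectories with `N` intermediate time steps: indices `0, 1, …, N+1`,
where index `0` is time `0` and index `N+1` is time `1`. -/
abbrev Traj (X : Type*) (N : ℕ) := Fin (N + 2) → X

variable {X : Type*} [Fintype X] [DecidableEq X] {N : ℕ}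

/-- One-time marginal of a process at time index `i`. -/
noncomputable def timeMarg (q : Traj X N → ℝ) (i : Fin (N + 2)) (x : X) : ℝ :=
  ∑ ω : Traj X N, if ω i = x then q ω else 0

/-- Joint marginal of the endpoints `(x_0, x_1)`. -/
noncomputable def endMarg (q : Traj X N → ℝ) (a b : X) : ℝ :=
  ∑ ω : Traj X N, if ω 0 = a ∧ ω (Fin.last (N + 1)) = b then q ω else 0

/-- Joint marginal at the neighboring time indices `n` and `n+1`. -/
noncomputable def pairMarg (q : Traj X N → ℝ) (n : Fin (N + 1)) (y z : X) : ℝ :=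
  ∑ ω : Traj X N, if ω n.castSucc = y ∧ ω n.succ = z then q ω else 0

/-- Transition probability `q(x_{t_n} = z | x_{t_{n-1}} = y)` for the step from
time index `n` to `n+1`. -/
noncomputable def transP (q : Traj X N → ℝ) (n : Fin (N + 1)) (y z : X) : ℝ :=
  pairMarg q n y z / timeMarg q n.castSucc y

/-- Glue endpoints `a`, `b` and inner states `v` into a trajectory. -/
def glue (a : X) (v : Fin N → X) (b : X) : Traj X N :=
  Fin.cons a (Fin.snoc v b)

/-- The bridge `q(x_in | x_0 = a, x_1 = b)`, as a function of the inner states. -/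
noncomputable def bridge (q : Traj X N → ℝ) (a b : X) (v : Fin N → X) : ℝ :=
  q (glue a v b) / endMarg q a b

/-- A process is Markov if it factorizes through its one-step transitions. -/
def IsMarkov (q : Traj X N → ℝ) : Prop :=
  ∀ ω : Traj X N,
    q ω = timeMarg q 0 (ω 0) * ∏ n : Fin (N + 1), transP q n (ω n.castSucc) (ω n.succ)

/-- A process `q` is reciprocal w.r.t. a full-support reference process `qref` if its
bridges coincide with those of `qref` wherever they are defined. -/
def IsReciprocal (qref q : Traj X N → ℝ) : Prop :=
  ∀ a b : X, 0 < endMarg q a b → ∀ v : Fin N → X, bridge q a b v = bridge qref a b v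

/-- Reciprocal projection of `q` w.r.t. `qref`:
`proj_R(q)(x_0, x_in, x_1) = qref(x_in | x_0, x_1) · q(x_0, x_1)`. -/
noncomputable def projR (qref q : Traj X N → ℝ) (ω : Traj X N) : ℝ :=
  (qref ω / endMarg qref (ω 0) (ω (Fin.last (N + 1)))) *
    endMarg q (ω 0) (ω (Fin.last (N + 1)))

/-- Markovian projection of `q`:
`proj_M(q)(x_0, x_in, x_1) = q(x_0) ∏_{n=1}^{N+1} q(x_{t_n} | x_{t_{n-1}})`. -/
noncomputable def projM (q : Traj X N → ℝ) (ω : Traj X N) : ℝ :=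
  timeMarg q 0 (ω 0) * ∏ n : Fin (N + 1), transP q n (ω n.castSucc) (ω n.succ)

/-- Marginal of the bridge of `q` at time index `i`:
`q(x_{t_i} = y | x_0 = a, x_1 = b)`. -/
noncomputable def bridgeAt (q : Traj X N → ℝ) (i : Fin (N + 2)) (y a b : X) : ℝ :=
  (∑ ω : Traj X N, if ω 0 = a ∧ ω i = y ∧ ω (Fin.last (N + 1)) = b then q ω else 0) /
    endMarg q a b

/-- Conditional transition given the terminal point:
`q(x_{t_n} = z | x_{t_{n-1}} = y, x_1 = b)` for the step from time index `n` to `n+1`. -/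
noncomputable def condTrans (q : Traj X N → ℝ) (n : Fin (N + 1)) (y z b : X) : ℝ :=
  (∑ ω : Traj X N,
      if ω n.castSucc = y ∧ ω n.succ = z ∧ ω (Fin.last (N + 1)) = b then q ω else 0) /
    (∑ ω : Traj X N, if ω n.castSucc = y ∧ ω (Fin.last (N + 1)) = b then q ω else 0)

/-- Membership in `Π_N(p_0, p_1)`: a process with prescribed marginals at times 0 and 1. -/
def InPiN (p0 p1 : X → ℝ) (q : Traj X N → ℝ) : Prop :=
  IsPMF q ∧ (∀ x, timeMarg q 0 x = p0 x) ∧ (∀ x, timeMarg q (Fin.last (N + 1)) x = p1 x)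

/-- Membership in `Π(p_0, p_1)`: couplings on `X²` with prescribed marginals. -/
def InPi2 (p0 p1 : X → ℝ) (s : X × X → ℝ) : Prop :=
  IsPMF s ∧ (∀ a, ∑ b, s (a, b) = p0 a) ∧ (∀ b, ∑ a, s (a, b) = p1 b)


/-!
Both projections satisfy a Pythagorean identity `KL(q ‖ m) = KL(q ‖ P q) + KL(P q ‖ m)` for
every full-support `m` that is Markov and reciprocal: `log (P q / m)` is a sum of functions of
statistics (the endpoints for `proj_R`; the initial state and consecutive pairs for `proj_M`)
whose laws `P` preserves. With `m = q^ref`, `KL(q^l ‖ q^ref)` decreases, so the gaps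
`KL(q^l ‖ q^{l+1})` tend to zero. Because there is an intermediate time, the pair marginals of
`proj_R q` are bounded below uniformly over `q ∈ Π_N(p_0, p_1)`, so the even iterates stay in a
compact set of full-support processes. A limit point is fixed by both projections, hence has a
density `u(x_0) v(x_1)` with respect to `q^ref`, which makes it the minimizer `q*`. Finally, with
`m = q*`, `KL(q^l ‖ q*)` decreases and vanishes along the subsequence.
-/

open Filter Topology InformationTheory

section KL

variable {Z : Type*} [Fintype Z]

lemma IsPMF.le_one {p : Z → ℝ} (hp : IsPMF p) (z : Z) : p z ≤ 1 :=
  hp.2 ▸ Finset.single_le_sum (fun z _ => hp.1 z) (Finset.mem_univ z)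

lemma KLd_self (a : Z → ℝ) : KLd a a = 0 :=
  Finset.sum_eq_zero fun z _ => by
    rcases eq_or_ne (a z) 0 with h | h <;> simp [h]

lemma mul_klFun_div_nonneg {a b : ℝ} (ha : 0 ≤ a) (hb : 0 < b) : 0 ≤ b * klFun (a / b) :=
  mul_nonneg hb.le (klFun_nonneg (div_nonneg ha hb.le))

lemma KLd_eq_sum_mul_klFun {a b : Z → ℝ} (ha : ∑ z, a z = 1) (hb : ∑ z, b z = 1)
    (hbpos : ∀ z, 0 < b z) : KLd a b = ∑ z, b z * klFun (a z / b z) := by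
  have hterm : ∀ z, a z * Real.log (a z / b z)
      = b z * klFun (a z / b z) + (a z - b z) := fun z => by
    rw [klFun_apply]
    field_simp [(hbpos z).ne']
    ring
  rw [KLd, Finset.sum_congr rfl fun z _ => hterm z, Finset.sum_add_distrib,
    Finset.sum_sub_distrib, ha, hb, sub_self, add_zero]

lemma KLd_nonneg {a b : Z → ℝ} (ha : IsPMF a) (hb : ∑ z, b z = 1) (hbpos : ∀ z, 0 < b z) :
    0 ≤ KLd a b := by
  rw [KLd_eq_sum_mul_klFun ha.2 hb hbpos]
  exact Finset.sum_nonneg fun z _ => mul_klFun_div_nonneg (ha.1 z) (hbpos z)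

lemma KLd_eq_zero_iff {a b : Z → ℝ} (ha : IsPMF a) (hb : ∑ z, b z = 1) (hbpos : ∀ z, 0 < b z) :
    KLd a b = 0 ↔ a = b := by
  refine ⟨fun h => ?_, fun h => h ▸ KLd_self a⟩
  rw [KLd_eq_sum_mul_klFun ha.2 hb hbpos,
    Finset.sum_eq_zero_iff_of_nonneg fun z _ => mul_klFun_div_nonneg (ha.1 z) (hbpos z)] at h
  funext z
  have hz := (mul_eq_zero.1 (h z (Finset.mem_univ z))).resolve_left (hbpos z).ne'
  rw [klFun_eq_zero_iff (div_nonneg (ha.1 z) (hbpos z).le),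
    div_eq_one_iff_eq (hbpos z).ne'] at hz
  exact hz

lemma KLd_eq_KLd_add_KLd {q p m : Z → ℝ} (hp : ∀ z, p z ≠ 0) (hm : ∀ z, m z ≠ 0)
    (h : ∑ z, q z * Real.log (p z / m z) = ∑ z, p z * Real.log (p z / m z)) :
    KLd q m = KLd q p + KLd p m := by
  have hterm : ∀ z, q z * Real.log (q z / m z)
      = q z * Real.log (q z / p z) + q z * Real.log (p z / m z) := fun z => by
    rcases eq_or_ne (q z) 0 with hq | hq
    · simp [hq]
    · rw [← mul_add, ← Real.log_mul (div_ne_zero hq (hp z)) (div_ne_zero (hp z) (hm z)),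
        div_mul_div_cancel₀ (hp z)]
  rw [KLd, Finset.sum_congr rfl fun z _ => hterm z, Finset.sum_add_distrib, h]
  rfl

lemma tendsto_KLd {ι : Type*} {l : Filter ι} {A B : ι → Z → ℝ} {a b : Z → ℝ}
    (hA : Tendsto A l (𝓝 a)) (hB : Tendsto B l (𝓝 b)) (ha : ∀ z, a z ≠ 0) (hb : ∀ z, b z ≠ 0) :
    Tendsto (fun k => KLd (A k) (B k)) l (𝓝 (KLd a b)) := by
  refine tendsto_finsetSum _ fun z _ => (tendsto_pi_nhds.1 hA z).mul ?_
  exact ((Real.continuousAt_log (div_ne_zero (ha z) (hb z))).tendsto).comp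
    ((tendsto_pi_nhds.1 hA z).div (tendsto_pi_nhds.1 hB z) (hb z))

lemma apply_eq_of_tendsto_KLd {P : (Z → ℝ) → Z → ℝ} {x : ℕ → Z → ℝ} {a : Z → ℝ}
    (hx : Tendsto x atTop (𝓝 a)) (hP : ContinuousAt P a) (ha : IsPMF a) (hapos : ∀ z, 0 < a z)
    (hPa : ∑ z, P a z = 1) (hPapos : ∀ z, 0 < P a z)
    (h : Tendsto (fun k => KLd (x k) (P (x k))) atTop (𝓝 0)) : P a = a := by
  have hlim := tendsto_KLd hx (hP.tendsto.comp hx) (fun z => (hapos z).ne')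
    (fun z => (hPapos z).ne')
  exact ((KLd_eq_zero_iff ha hPa hPapos).1 (tendsto_nhds_unique hlim h)).symm

end KL

section Marginal

variable {Ω Y : Type*} [Fintype Ω] [DecidableEq Y]

noncomputable def marginal (f : Ω → Y) (q : Ω → ℝ) (y : Y) : ℝ :=
  ∑ ω, if f ω = y then q ω else 0

lemma sum_mul_comp_eq_sum_marginal [Fintype Y] (f : Ω → Y) (q : Ω → ℝ) (g : Y → ℝ) :
    ∑ ω, q ω * g (f ω) = ∑ y, marginal f q y * g y := by
  simp only [marginal, Finset.sum_mul, ite_mul, zero_mul]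
  rw [Finset.sum_comm]
  simp

lemma sum_mul_comp_eq_of_marginal_eq [Fintype Y] {f : Ω → Y} {q p : Ω → ℝ}
    (h : marginal f q = marginal f p) (g : Y → ℝ) :
    ∑ ω, q ω * g (f ω) = ∑ ω, p ω * g (f ω) := by
  rw [sum_mul_comp_eq_sum_marginal f q, sum_mul_comp_eq_sum_marginal f p, h]

lemma sum_marginal [Fintype Y] (f : Ω → Y) (q : Ω → ℝ) : ∑ y, marginal f q y = ∑ ω, q ω := by
  simpa using (sum_mul_comp_eq_sum_marginal f q fun _ => 1).symm

lemma marginal_eq_sum_mul_ite (f : Ω → Y) (q : Ω → ℝ) (y : Y) :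
    marginal f q y = ∑ ω, q ω * if f ω = y then 1 else 0 := by
  simp [marginal]

lemma marginal_nonneg {q : Ω → ℝ} (hq : ∀ ω, 0 ≤ q ω) (f : Ω → Y) (y : Y) :
    0 ≤ marginal f q y :=
  Finset.sum_nonneg fun ω _ => by split_ifs <;> simp [hq ω]

lemma marginal_le_sum {q : Ω → ℝ} (hq : ∀ ω, 0 ≤ q ω) (f : Ω → Y) (y : Y) :
    marginal f q y ≤ ∑ ω, q ω :=
  Finset.sum_le_sum fun ω _ => by split_ifs <;> simp [hq ω]

lemma marginal_pos {q : Ω → ℝ} (hq : ∀ ω, 0 < q ω) {f : Ω → Y} {y : Y} (hy : ∃ ω, f ω = y) :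
    0 < marginal f q y := by
  obtain ⟨ω, hω⟩ := hy
  exact Finset.sum_pos' (fun ω _ => by split_ifs <;> simp [(hq ω).le])
    ⟨ω, Finset.mem_univ _, by simp [hω, hq ω]⟩

lemma sum_comp_le_marginal {α : Type*} [Fintype α] {s : α → Ω} (hs : Function.Injective s)
    {q : Ω → ℝ} (hq : ∀ ω, 0 ≤ q ω) (f : Ω → Y) (y : Y) :
    ∑ a, (if f (s a) = y then q (s a) else 0) ≤ marginal f q y := by
  calc ∑ a, (if f (s a) = y then q (s a) else 0)
      = ∑ ω ∈ Finset.univ.map ⟨s, hs⟩, if f ω = y then q ω else 0 := by rw [Finset.sum_map]; rfl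
    _ ≤ marginal f q y := Finset.sum_le_univ_sum_of_nonneg fun ω => by split_ifs <;> simp [hq ω]

lemma continuous_marginal (f : Ω → Y) (y : Y) : Continuous fun q : Ω → ℝ => marginal f q y :=
  continuous_finsetSum _ fun ω _ => by split_ifs <;> fun_prop

end Marginal

section TrajMarginal

lemma timeMarg_eq_marginal (q : Traj X N → ℝ) (i : Fin (N + 2)) :
    timeMarg q i = marginal (fun ω => ω i) q := rfl

lemma endMarg_eq_marginal (q : Traj X N → ℝ) (a b : X) :
    endMarg q a b = marginal (fun ω => (ω 0, ω (Fin.last (N + 1)))) q (a, b) := by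
  simp [endMarg, marginal]

lemma pairMarg_eq_marginal (q : Traj X N → ℝ) (n : Fin (N + 1)) (y z : X) :
    pairMarg q n y z = marginal (fun ω => (ω n.castSucc, ω n.succ)) q (y, z) := by
  simp [pairMarg, marginal]

lemma sum_endMarg_right (q : Traj X N → ℝ) (a : X) :
    ∑ b, endMarg q a b = timeMarg q 0 a := by
  simp only [endMarg, timeMarg]
  rw [Finset.sum_comm]
  refine Finset.sum_congr rfl fun ω _ => ?_
  by_cases h : ω 0 = a <;> simp [h]

lemma sum_endMarg_left (q : Traj X N → ℝ) (b : X) :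
    ∑ a, endMarg q a b = timeMarg q (Fin.last (N + 1)) b := by
  simp only [endMarg, timeMarg]
  rw [Finset.sum_comm]
  refine Finset.sum_congr rfl fun ω _ => ?_
  by_cases h : ω (Fin.last (N + 1)) = b <;> simp [h, and_comm]

lemma sum_pairMarg_right (q : Traj X N → ℝ) (n : Fin (N + 1)) (y : X) :
    ∑ z, pairMarg q n y z = timeMarg q n.castSucc y := by
  simp only [pairMarg, timeMarg]
  rw [Finset.sum_comm]
  refine Finset.sum_congr rfl fun ω _ => ?_
  by_cases h : ω n.castSucc = y <;> simp [h]

lemma sum_pairMarg_left (q : Traj X N → ℝ) (n : Fin (N + 1)) (z : X) :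
    ∑ y, pairMarg q n y z = timeMarg q n.succ z := by
  simp only [pairMarg, timeMarg]
  rw [Finset.sum_comm]
  refine Finset.sum_congr rfl fun ω _ => ?_
  by_cases h : ω n.succ = z <;> simp [h, and_comm]

lemma timeMarg_pos {q : Traj X N → ℝ} (hq : ∀ ω, 0 < q ω) (i : Fin (N + 2)) (x : X) :
    0 < timeMarg q i x :=
  marginal_pos hq ⟨fun _ => x, rfl⟩

lemma endMarg_pos {q : Traj X N → ℝ} (hq : ∀ ω, 0 < q ω) (a b : X) : 0 < endMarg q a b := by
  rw [endMarg_eq_marginal]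
  exact marginal_pos hq ⟨fun i => if i = 0 then a else b, by simp⟩

lemma pairMarg_pos {q : Traj X N → ℝ} (hq : ∀ ω, 0 < q ω) (n : Fin (N + 1)) (y z : X) :
    0 < pairMarg q n y z := by
  rw [pairMarg_eq_marginal]
  exact marginal_pos hq ⟨fun i => if i = n.castSucc then y else z,
    by simp [(Fin.castSucc_lt_succ (i := n)).ne']⟩

lemma transP_pos {q : Traj X N → ℝ} (hq : ∀ ω, 0 < q ω) (n : Fin (N + 1)) (y z : X) :
    0 < transP q n y z :=
  div_pos (pairMarg_pos hq n y z) (timeMarg_pos hq _ y)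

lemma sum_transP {q : Traj X N → ℝ} (hq : ∀ ω, 0 < q ω) (n : Fin (N + 1)) (y : X) :
    ∑ z, transP q n y z = 1 := by
  simp only [transP]
  rw [← Finset.sum_div, sum_pairMarg_right, div_self (timeMarg_pos hq _ y).ne']

end TrajMarginal

section MarkovChain

variable {S : Type*} {k : ℕ}

def chainDensity (g : S → ℝ) (K : Fin k → S → S → ℝ) (ω : Fin (k + 1) → S) : ℝ :=
  g (ω 0) * ∏ n : Fin k, K n (ω n.castSucc) (ω n.succ)

lemma chainDensity_snoc (g : S → ℝ) (K : Fin (k + 1) → S → S → ℝ) (ρ : Fin (k + 1) → S)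
    (b : S) :
    chainDensity g K (Fin.snoc ρ b) =
      chainDensity g (fun n => K n.castSucc) ρ * K (Fin.last k) (ρ (Fin.last k)) b := by
  simp only [chainDensity, Fin.prod_univ_castSucc, Fin.snoc_apply_zero, Fin.succ_castSucc,
    Fin.snoc_castSucc, Fin.succ_last, Fin.snoc_last, mul_assoc]

variable [Fintype S]

lemma sum_pi_snoc {M : Type*} [AddCommMonoid M] (F : (Fin (k + 1) → S) → M) :
    ∑ ω, F ω = ∑ b, ∑ ρ : Fin k → S, F (Fin.snoc ρ b) := by
  rw [← (Fin.snocEquiv fun _ => S).sum_comp, Fintype.sum_prod_type]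
  rfl

variable {g : S → ℝ}

def IsChainFlow (g : S → ℝ) (K : Fin k → S → S → ℝ) (μ : Fin (k + 1) → S → ℝ) : Prop :=
  μ 0 = g ∧ ∀ n z, μ n.succ z = ∑ y, μ n.castSucc y * K n y z

lemma IsChainFlow.castSucc {K : Fin (k + 1) → S → S → ℝ} {μ : Fin (k + 2) → S → ℝ}
    (h : IsChainFlow g K μ) :
    IsChainFlow g (fun n => K n.castSucc) (fun i => μ i.castSucc) :=
  ⟨h.1, fun n z => by simpa only [Fin.succ_castSucc] using h.2 n.castSucc z⟩

lemma sum_chainDensity_mul_last : ∀ {k : ℕ} {K : Fin k → S → S → ℝ} {μ : Fin (k + 1) → S → ℝ},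
    IsChainFlow g K μ → ∀ f : S → ℝ,
    ∑ ω, chainDensity g K ω * f (ω (Fin.last k)) = ∑ x, μ (Fin.last k) x * f x
  | 0, K, μ, hμ, f => by
    rw [← (Equiv.funUnique (Fin 1) S).symm.sum_comp]
    simp [chainDensity, hμ.1]
  | k + 1, K, μ, hμ, f => by
    rw [sum_pi_snoc, Finset.sum_comm]
    simp only [chainDensity_snoc, Fin.snoc_last, mul_assoc, ← Finset.mul_sum]
    rw [sum_chainDensity_mul_last hμ.castSucc fun y => ∑ z, K (Fin.last k) y z * f z]
    simp only [← Fin.succ_last, hμ.2, Finset.sum_mul, Finset.mul_sum, mul_assoc]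
    exact Finset.sum_comm

lemma sum_chainDensity_mul_step : ∀ {k : ℕ} {K : Fin k → S → S → ℝ} {μ : Fin (k + 1) → S → ℝ},
    (∀ n y, ∑ z, K n y z = 1) → IsChainFlow g K μ → ∀ (j : Fin k) (f : S → S → ℝ),
    ∑ ω, chainDensity g K ω * f (ω j.castSucc) (ω j.succ) =
      ∑ y, ∑ z, μ j.castSucc y * K j y z * f y z
  | 0, _, _, _, _, j, _ => j.elim0
  | k + 1, K, μ, hK, hμ, j, f => by
    rw [sum_pi_snoc, Finset.sum_comm]
    induction j using Fin.lastCases with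
    | last =>
      simp only [chainDensity_snoc, Fin.succ_last, Fin.snoc_last, Fin.snoc_castSucc, mul_assoc,
        ← Finset.mul_sum]
      rw [sum_chainDensity_mul_last hμ.castSucc fun y => ∑ z, K (Fin.last k) y z * f y z]
    | cast m =>
      conv_lhs => simp only [chainDensity_snoc, Fin.succ_castSucc, Fin.snoc_castSucc,
        mul_right_comm _ (K _ _ _), ← Finset.mul_sum, hK, mul_one]
      exact sum_chainDensity_mul_step (fun n y => hK n.castSucc y) hμ.castSucc m f

end MarkovChain

section Projections

variable {p0 p1 : X → ℝ} {qref q m : Traj X N → ℝ}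

lemma projM_eq_chainDensity (q : Traj X N → ℝ) :
    projM q = chainDensity (timeMarg q 0) (transP q) := rfl

lemma isMarkov_iff : IsMarkov q ↔ projM q = q :=
  ⟨fun h => funext fun ω => (h ω).symm, fun h ω => (congrFun h ω).symm⟩

lemma isChainFlow_timeMarg (hq : ∀ ω, 0 < q ω) :
    IsChainFlow (timeMarg q 0) (transP q) (timeMarg q) := by
  refine ⟨rfl, fun n z => ?_⟩
  simp only [transP, mul_div_cancel₀ _ (timeMarg_pos hq _ _).ne']
  exact (sum_pairMarg_left q n z).symm

lemma pairMarg_projM (hq : ∀ ω, 0 < q ω) (n : Fin (N + 1)) (y z : X) :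
    pairMarg (projM q) n y z = pairMarg q n y z := by
  rw [pairMarg_eq_marginal, marginal_eq_sum_mul_ite, projM_eq_chainDensity,
    sum_chainDensity_mul_step (sum_transP hq) (isChainFlow_timeMarg hq) n
      fun y' z' => if (y', z') = (y, z) then 1 else 0]
  simp [transP, mul_div_cancel₀ _ (timeMarg_pos hq _ _).ne', ite_and]

lemma marginal_step_projM (hq : ∀ ω, 0 < q ω) (n : Fin (N + 1)) :
    marginal (fun ω => (ω n.castSucc, ω n.succ)) (projM q) =
      marginal (fun ω => (ω n.castSucc, ω n.succ)) q :=
  funext fun e => by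
    rw [← pairMarg_eq_marginal, ← pairMarg_eq_marginal, pairMarg_projM hq]

lemma timeMarg_projM (hq : ∀ ω, 0 < q ω) (i : Fin (N + 2)) :
    timeMarg (projM q) i = timeMarg q i := by
  funext x
  induction i using Fin.lastCases with
  | last => simp only [← Fin.succ_last, ← sum_pairMarg_left, pairMarg_projM hq]
  | cast n => simp only [← sum_pairMarg_right, pairMarg_projM hq]

lemma projM_pos (hq : ∀ ω, 0 < q ω) (ω : Traj X N) : 0 < projM q ω :=
  mul_pos (timeMarg_pos hq _ _) (Finset.prod_pos fun n _ => transP_pos hq n _ _)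

lemma inPiN_projM (hq : InPiN p0 p1 q) (hqpos : ∀ ω, 0 < q ω) : InPiN p0 p1 (projM q) := by
  refine ⟨⟨fun ω => (projM_pos hqpos ω).le, ?_⟩, ?_, ?_⟩
  · rw [← sum_marginal (fun ω => ω 0), ← timeMarg_eq_marginal, timeMarg_projM hqpos,
      timeMarg_eq_marginal, sum_marginal, hq.1.2]
  · simpa only [timeMarg_projM hqpos] using hq.2.1
  · simpa only [timeMarg_projM hqpos] using hq.2.2

lemma continuousAt_projM (hq : ∀ ω, 0 < q ω) : ContinuousAt projM q := by
  refine continuousAt_pi.2 fun ω => ((continuous_marginal _ _).continuousAt).mul ?_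
  refine tendsto_finsetProd _ fun n _ => ?_
  simp only [transP, pairMarg_eq_marginal]
  exact (continuous_marginal _ _).continuousAt.div (continuous_marginal _ _).continuousAt
    (timeMarg_pos hq _ _).ne'

lemma projR_pos (href : ∀ ω, 0 < qref ω) (hq : ∀ ω, 0 < q ω) (ω : Traj X N) :
    0 < projR qref q ω :=
  mul_pos (div_pos (href ω) (endMarg_pos href _ _)) (endMarg_pos hq _ _)

lemma projR_nonneg (href : ∀ ω, 0 < qref ω) (hq : ∀ ω, 0 ≤ q ω) (ω : Traj X N) :
    0 ≤ projR qref q ω :=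
  mul_nonneg (div_pos (href ω) (endMarg_pos href _ _)).le
    (by simpa only [endMarg_eq_marginal] using marginal_nonneg hq _ _)

lemma projR_self (href : ∀ ω, 0 < qref ω) : projR qref qref = qref :=
  funext fun _ => div_mul_cancel₀ _ (endMarg_pos href _ _).ne'

lemma endMarg_projR (href : ∀ ω, 0 < qref ω) (q : Traj X N → ℝ) (a b : X) :
    endMarg (projR qref q) a b = endMarg q a b := by
  have hterm : ∀ ω : Traj X N,
      (if ω 0 = a ∧ ω (Fin.last (N + 1)) = b then projR qref q ω else 0) =
        (if ω 0 = a ∧ ω (Fin.last (N + 1)) = b then qref ω else 0) *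
          (endMarg q a b / endMarg qref a b) := fun ω => by
    split_ifs with h
    · rw [projR, h.1, h.2]
      ring
    · rw [zero_mul]
  rw [endMarg, Finset.sum_congr rfl fun ω _ => hterm ω, ← Finset.sum_mul, ← endMarg,
    mul_div_cancel₀ _ (endMarg_pos href a b).ne']

lemma marginal_ends_projR (href : ∀ ω, 0 < qref ω) (q : Traj X N → ℝ) :
    marginal (fun ω => (ω 0, ω (Fin.last (N + 1)))) (projR qref q) =
      marginal (fun ω => (ω 0, ω (Fin.last (N + 1)))) q :=
  funext fun e => by
    rw [← endMarg_eq_marginal, ← endMarg_eq_marginal, endMarg_projR href]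

lemma inPiN_projR (href : ∀ ω, 0 < qref ω) (hq : InPiN p0 p1 q) :
    InPiN p0 p1 (projR qref q) := by
  have h0 : timeMarg (projR qref q) 0 = timeMarg q 0 := funext fun a => by
    simp only [← sum_endMarg_right, endMarg_projR href]
  have h1 : timeMarg (projR qref q) (Fin.last (N + 1)) = timeMarg q (Fin.last (N + 1)) :=
    funext fun b => by simp only [← sum_endMarg_left, endMarg_projR href]
  refine ⟨⟨projR_nonneg href hq.1.1, ?_⟩, by simpa only [h0] using hq.2.1,
    by simpa only [h1] using hq.2.2⟩
  rw [← sum_marginal (fun ω => ω 0), ← timeMarg_eq_marginal, h0, timeMarg_eq_marginal,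
    sum_marginal, hq.1.2]

lemma continuous_projR (qref : Traj X N → ℝ) : Continuous (projR qref) :=
  continuous_pi fun ω => continuous_const.mul <| by
    simpa only [endMarg_eq_marginal] using continuous_marginal _ _

lemma KLd_eq_KLd_projR_add (href : ∀ ω, 0 < qref ω) (hq : ∀ ω, 0 < q ω)
    (hm : ∀ ω, 0 < m ω) (hmR : projR qref m = m) :
    KLd q m = KLd q (projR qref q) + KLd (projR qref q) m := by
  have hlog : ∀ ω, Real.log (projR qref q ω / m ω) =
      Real.log (endMarg q (ω 0) (ω (Fin.last (N + 1))) /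
        endMarg m (ω 0) (ω (Fin.last (N + 1)))) := fun ω => by
    conv_lhs => rw [← hmR]
    rw [projR, projR, mul_div_mul_left _ _
      (div_ne_zero (href ω).ne' (endMarg_pos href (ω 0) (ω (Fin.last (N + 1)))).ne')]
  refine KLd_eq_KLd_add_KLd (fun ω => (projR_pos href hq ω).ne') (fun ω => (hm ω).ne') ?_
  simp only [hlog]
  exact sum_mul_comp_eq_of_marginal_eq (marginal_ends_projR href q).symm
    fun e => Real.log (endMarg q e.1 e.2 / endMarg m e.1 e.2)

lemma KLd_eq_KLd_projM_add (hq : ∀ ω, 0 < q ω) (hm : ∀ ω, 0 < m ω) (hmM : IsMarkov m) :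
    KLd q m = KLd q (projM q) + KLd (projM q) m := by
  have hlog : ∀ ω, Real.log (projM q ω / m ω) =
      Real.log (timeMarg q 0 (ω 0) / timeMarg m 0 (ω 0)) +
        ∑ n : Fin (N + 1), Real.log (transP q n (ω n.castSucc) (ω n.succ) /
          transP m n (ω n.castSucc) (ω n.succ)) := fun ω => by
    conv_lhs => rw [← isMarkov_iff.1 hmM]
    rw [projM, projM, mul_div_mul_comm, ← Finset.prod_div_distrib,
      Real.log_mul (div_pos (timeMarg_pos hq _ _) (timeMarg_pos hm _ _)).ne'
        (Finset.prod_pos fun n _ => div_pos (transP_pos hq n _ _) (transP_pos hm n _ _)).ne',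
      Real.log_prod fun n _ => (div_pos (transP_pos hq n _ _) (transP_pos hm n _ _)).ne']
  refine KLd_eq_KLd_add_KLd (fun ω => (projM_pos hq ω).ne') (fun ω => (hm ω).ne') ?_
  simp only [hlog, mul_add, Finset.mul_sum, Finset.sum_add_distrib]
  congr 1
  · exact sum_mul_comp_eq_of_marginal_eq (timeMarg_projM hq 0).symm
      fun x => Real.log (timeMarg q 0 x / timeMarg m 0 x)
  · rw [Finset.sum_comm]
    conv_rhs => rw [Finset.sum_comm]
    exact Finset.sum_congr rfl fun n _ => sum_mul_comp_eq_of_marginal_eq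
      (marginal_step_projM hq n).symm fun e => Real.log (transP q n e.1 e.2 / transP m n e.1 e.2)

end Projections

section Schrodinger

def constPath {S : Type*} {N : ℕ} (x0 a b : S) : Traj S N :=
  fun i => if i = 0 then a else if i = Fin.last (N + 1) then b else x0

variable {S : Type*} {x0 a b : S}

@[simp]
lemma constPath_zero : (constPath x0 a b : Traj S N) 0 = a := rfl

@[simp]
lemma constPath_last : (constPath x0 a b : Traj S N) (Fin.last (N + 1)) = b := by
  simp [constPath]

lemma constPath_castSucc (n : Fin (N + 1)) :
    (constPath x0 a b : Traj S N) n.castSucc = if n = 0 then a else x0 := by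
  simp [constPath, Fin.castSucc_ne_last]

lemma constPath_succ (n : Fin (N + 1)) :
    (constPath x0 a b : Traj S N) n.succ = if n = Fin.last N then b else x0 := by
  simp [constPath, Fin.succ_ne_zero]

variable {qref w m : Traj X N → ℝ}

/-- With an intermediate time, each one-step factor along `constPath x0 a b` depends on at most
one of `a`, `b`. -/
lemma IsMarkov.mul_constPath (hN : 1 ≤ N) (hm : IsMarkov m) (x0 a b : X) :
    m (constPath x0 a b) * m (constPath x0 x0 x0) =
      m (constPath x0 a x0) * m (constPath x0 x0 b) := by
  have h0 : (0 : Fin (N + 1)) ≠ Fin.last N := by simp [Fin.ext_iff]; omega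
  rw [hm (constPath x0 a b), hm (constPath x0 x0 x0), hm (constPath x0 a x0),
    hm (constPath x0 x0 b)]
  simp only [constPath_zero, constPath_castSucc, constPath_succ, mul_mul_mul_comm _ (∏ _, _),
    ← Finset.prod_mul_distrib]
  congr 1
  refine Finset.prod_congr rfl fun n _ => ?_
  by_cases ha : n = 0
  · simp [ha, h0]
  · by_cases hb : n = Fin.last N <;> simp [ha, hb, h0.symm, mul_comm]

lemma exists_log_div_eq_add [Nonempty X] (hN : 1 ≤ N) (href : ∀ ω, 0 < qref ω)
    (hrefM : IsMarkov qref) (hw : ∀ ω, 0 < w ω) (hwR : projR qref w = w) (hwM : IsMarkov w) :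
    ∃ φ ψ : X → ℝ, ∀ ω, Real.log (w ω / qref ω) = φ (ω 0) + ψ (ω (Fin.last (N + 1))) := by
  obtain ⟨x0⟩ := ‹Nonempty X›
  have hratio : ∀ ω, w ω / qref ω = endMarg w (ω 0) (ω (Fin.last (N + 1))) /
      endMarg qref (ω 0) (ω (Fin.last (N + 1))) := fun ω => by
    conv_lhs => rw [← hwR]
    unfold projR
    field_simp [(href ω).ne', (endMarg_pos href (ω 0) (ω (Fin.last (N + 1)))).ne']
  set ρ : Traj X N → ℝ := fun ω => w ω / qref ω with hρ
  have hρpos : ∀ ω, 0 < ρ ω := fun ω => div_pos (hw ω) (href ω)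
  have hρends : ∀ ω, ρ ω = ρ (constPath x0 (ω 0) (ω (Fin.last (N + 1)))) := fun ω => by
    simp only [hρ, hratio, constPath_zero, constPath_last]
  have hfour : ∀ a b, ρ (constPath x0 a b) =
      ρ (constPath x0 a x0) * ρ (constPath x0 x0 b) / ρ (constPath x0 x0 x0) := fun a b => by
    rw [eq_div_iff (hρpos _).ne', hρ]
    simp only [div_mul_div_comm, hwM.mul_constPath hN, hrefM.mul_constPath hN]
  refine ⟨fun a => Real.log (ρ (constPath x0 a x0)),
    fun b => Real.log (ρ (constPath x0 x0 b)) - Real.log (ρ (constPath x0 x0 x0)), fun ω => ?_⟩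
  change Real.log (ρ ω) = _
  rw [hρends, hfour, Real.log_div (mul_pos (hρpos _) (hρpos _)).ne' (hρpos _).ne',
    Real.log_mul (hρpos _).ne' (hρpos _).ne']
  ring

lemma KLd_le_KLd_of_isMarkov_of_projR_eq [Nonempty X] (hN : 1 ≤ N) (href : ∀ ω, 0 < qref ω)
    (hrefM : IsMarkov qref) (hw : ∑ ω, w ω = 1) (hwpos : ∀ ω, 0 < w ω) (hwR : projR qref w = w)
    (hwM : IsMarkov w) {r : Traj X N → ℝ} (hr : IsPMF r) (h0 : timeMarg r 0 = timeMarg w 0)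
    (h1 : timeMarg r (Fin.last (N + 1)) = timeMarg w (Fin.last (N + 1))) :
    KLd w qref ≤ KLd r qref := by
  obtain ⟨φ, ψ, hφψ⟩ := exists_log_div_eq_add hN href hrefM hwpos hwR hwM
  have hsplit : KLd r qref = KLd r w + KLd w qref := by
    refine KLd_eq_KLd_add_KLd (fun ω => (hwpos ω).ne') (fun ω => (href ω).ne') ?_
    simp only [hφψ, mul_add, Finset.sum_add_distrib]
    rw [sum_mul_comp_eq_of_marginal_eq (f := fun ω : Traj X N => ω 0) h0 φ,
      sum_mul_comp_eq_of_marginal_eq (f := fun ω : Traj X N => ω (Fin.last (N + 1))) h1 ψ]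
  linarith [KLd_nonneg hr hw hwpos]

end Schrodinger

section LowerBound

variable {p0 p1 : X → ℝ} {qref q : Traj X N → ℝ} {c : ℝ}

lemma mul_endMarg_le_projR (hc : ∀ ω, c ≤ qref ω) (href : ∑ ω, qref ω = 1)
    (hrefpos : ∀ ω, 0 < qref ω) (hq : ∀ ω, 0 ≤ q ω) (ω : Traj X N) :
    c * endMarg q (ω 0) (ω (Fin.last (N + 1))) ≤ projR qref q ω := by
  have hE := endMarg_pos hrefpos (ω 0) (ω (Fin.last (N + 1)))
  have hE1 : endMarg qref (ω 0) (ω (Fin.last (N + 1))) ≤ 1 := by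
    simpa only [endMarg_eq_marginal, href] using marginal_le_sum (fun ω => (hrefpos ω).le) _ _
  refine mul_le_mul_of_nonneg_right ((hc ω).trans (le_div_self (hrefpos ω).le hE hE1)) ?_
  simpa only [endMarg_eq_marginal] using marginal_nonneg hq _ _

lemma min_timeMarg_le_sum_endMarg (hN : 1 ≤ N) (hq : ∀ ω, 0 ≤ q ω) (n : Fin (N + 1)) (y z : X) :
    min (timeMarg q 0 y) (timeMarg q (Fin.last (N + 1)) z) ≤
      ∑ e : X × X, if (n = 0 → e.1 = y) ∧ (n = Fin.last N → e.2 = z)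
        then endMarg q e.1 e.2 else 0 := by
  have h0 : (0 : Fin (N + 1)) ≠ Fin.last N := by simp [Fin.ext_iff]; omega
  by_cases hn0 : n = 0
  · subst hn0
    simp [h0, Fintype.sum_prod_type, sum_endMarg_right]
  by_cases hnl : n = Fin.last N
  · subst hnl
    rw [Fintype.sum_prod_type_right]
    simp [h0.symm, sum_endMarg_left]
  · simp only [hn0, hnl, false_imp_iff, and_self, if_true, Fintype.sum_prod_type,
      sum_endMarg_right]
    exact min_le_of_left_le
      (Finset.single_le_sum (fun x _ => marginal_nonneg hq (fun ω => ω 0) x) (Finset.mem_univ y))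

/-- For endpoints `(a, b)` compatible with passing through `y` at time `n` and `z` at time `n+1`,
the single trajectory `s (a, b)` already carries mass `≥ c · endMarg q a b` under `proj_R q`. -/
lemma mul_min_timeMarg_le_pairMarg_projR (hN : 1 ≤ N) (hc0 : 0 ≤ c) (hc : ∀ ω, c ≤ qref ω)
    (href : ∑ ω, qref ω = 1) (hrefpos : ∀ ω, 0 < qref ω) (hq : ∀ ω, 0 ≤ q ω) (n : Fin (N + 1))
    (y z : X) :
    c * min (timeMarg q 0 y) (timeMarg q (Fin.last (N + 1)) z) ≤
      pairMarg (projR qref q) n y z := by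
  let s : X × X → Traj X N := fun e i =>
    if i = 0 then e.1 else if i = Fin.last (N + 1) then e.2 else if i = n.succ then z else y
  have hs0 : ∀ e, s e 0 = e.1 := fun e => rfl
  have hs1 : ∀ e, s e (Fin.last (N + 1)) = e.2 := fun e => by simp [s]
  have hs : Function.Injective s := fun e e' h =>
    Prod.ext (by simpa only [hs0] using congrFun h 0)
      (by simpa only [hs1] using congrFun h (Fin.last (N + 1)))
  have hpass : ∀ e : X × X, (n = 0 → e.1 = y) → (n = Fin.last N → e.2 = z) →
      (s e n.castSucc, s e n.succ) = (y, z) := by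
    rintro ⟨a, b⟩ ha hb
    refine Prod.ext ?_ ?_
    · by_cases hn0 : n = 0
      · simpa [s, hn0] using ha hn0
      · simp [s, hn0, Fin.castSucc_ne_last, (Fin.castSucc_lt_succ (i := n)).ne]
    · by_cases hnl : n = Fin.last N
      · simpa [s, hnl] using hb hnl
      · simp [s, hnl, Fin.succ_ne_zero]
  calc c * min (timeMarg q 0 y) (timeMarg q (Fin.last (N + 1)) z)
      ≤ ∑ e : X × X, if (n = 0 → e.1 = y) ∧ (n = Fin.last N → e.2 = z)
          then c * endMarg q e.1 e.2 else 0 := by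
        simpa only [Finset.mul_sum, mul_ite, mul_zero] using
          mul_le_mul_of_nonneg_left (min_timeMarg_le_sum_endMarg hN hq n y z) hc0
    _ ≤ ∑ e : X × X, if (s e n.castSucc, s e n.succ) = (y, z) then projR qref q (s e) else 0 := by
        refine Finset.sum_le_sum fun e _ => ?_
        split_ifs with he hse hse
        · rw [← hs0 e, ← hs1 e]
          exact mul_endMarg_le_projR hc href hrefpos hq (s e)
        · exact absurd (hpass e he.1 he.2) hse
        · exact projR_nonneg hrefpos hq _
        · exact le_rfl
    _ ≤ pairMarg (projR qref q) n y z := by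
        rw [pairMarg_eq_marginal]
        exact sum_comp_le_marginal hs (projR_nonneg hrefpos hq)
          (fun ω => (ω n.castSucc, ω n.succ)) _

lemma le_transP_of_le_pairMarg {r : Traj X N → ℝ} (hr : IsPMF r) {ε : ℝ} (hε : 0 < ε)
    {n : Fin (N + 1)} {y z : X} (h : ε ≤ pairMarg r n y z) : ε ≤ transP r n y z := by
  have hpair_nonneg : ∀ z', 0 ≤ pairMarg r n y z' := fun z' => by
    simpa only [pairMarg_eq_marginal] using marginal_nonneg hr.1 _ _
  have hpos : 0 < timeMarg r n.castSucc y := by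
    rw [← sum_pairMarg_right]
    exact (hε.trans_le h).trans_le
      (Finset.single_le_sum (fun z' _ => hpair_nonneg z') (Finset.mem_univ z))
  have hle : timeMarg r n.castSucc y ≤ 1 := hr.2 ▸ marginal_le_sum hr.1 _ _
  exact h.trans (le_div_self (hpair_nonneg z) hpos hle)

lemma exists_pos_le_projM_projR [Nonempty X] (hN : 1 ≤ N) (href : ∑ ω, qref ω = 1)
    (hrefpos : ∀ ω, 0 < qref ω) (hp0 : ∀ x, 0 < p0 x) (hp1 : ∀ x, 0 < p1 x) :
    ∃ δ > 0, ∀ q, InPiN p0 p1 q → ∀ ω, δ ≤ projM (projR qref q) ω := by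
  obtain ⟨ωc, hωc⟩ := Finite.exists_min qref
  obtain ⟨a0, ha0⟩ := Finite.exists_min p0
  obtain ⟨b0, hb0⟩ := Finite.exists_min p1
  set ε := qref ωc * min (p0 a0) (p1 b0)
  have hε : 0 < ε := mul_pos (hrefpos ωc) (lt_min (hp0 a0) (hp1 b0))
  refine ⟨p0 a0 * ε ^ (N + 1), mul_pos (hp0 a0) (pow_pos hε _), fun q hq ω => ?_⟩
  set r := projR qref q
  have hr : InPiN p0 p1 r := inPiN_projR hrefpos hq
  have hpair : ∀ n y z, ε ≤ pairMarg r n y z := fun n y z =>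
    calc ε ≤ qref ωc * min (timeMarg q 0 y) (timeMarg q (Fin.last (N + 1)) z) := by
          rw [hq.2.1, hq.2.2]
          exact mul_le_mul_of_nonneg_left (min_le_min (ha0 y) (hb0 z)) (hrefpos ωc).le
      _ ≤ pairMarg r n y z :=
          mul_min_timeMarg_le_pairMarg_projR hN (hrefpos ωc).le hωc href hrefpos hq.1.1 n y z
  have htrans : ∀ n y z, ε ≤ transP r n y z := fun n y z =>
    le_transP_of_le_pairMarg hr.1 hε (hpair n y z)
  calc p0 a0 * ε ^ (N + 1)
      ≤ timeMarg r 0 (ω 0) * ∏ n : Fin (N + 1), transP r n (ω n.castSucc) (ω n.succ) := by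
        refine mul_le_mul ?_ ?_ (pow_pos hε _).le (marginal_nonneg hr.1.1 _ _)
        · rw [hr.2.1]
          exact ha0 _
        · calc ε ^ (N + 1) = ∏ _n : Fin (N + 1), ε := by simp
            _ ≤ _ := Finset.prod_le_prod (fun _ _ => hε.le) fun n _ => htrans n _ _
    _ = projM r ω := rfl

end LowerBound

section Iteration

variable {p0 p1 : X → ℝ} {qref m : Traj X N → ℝ} {Q : ℕ → Traj X N → ℝ}

lemma isClosed_setOf_inPiN (p0 p1 : X → ℝ) : IsClosed {q : Traj X N → ℝ | InPiN p0 p1 q} := by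
  simp only [InPiN, IsPMF, Set.ofPred_and, Set.ofPred_forall]
  refine ((isClosed_iInter fun ω => isClosed_le continuous_const (continuous_apply ω)).inter
    (isClosed_eq (continuous_finsetSum _ fun ω _ => continuous_apply ω) continuous_const)).inter
    ((isClosed_iInter fun x => isClosed_eq (continuous_marginal _ x) continuous_const).inter
      (isClosed_iInter fun x => isClosed_eq (continuous_marginal _ x) continuous_const))

lemma succ_eq_projR_or_projM (hQodd : ∀ l, Q (2 * l + 1) = projR qref (Q (2 * l)))
    (hQeven : ∀ l, Q (2 * l + 2) = projM (Q (2 * l + 1))) (l : ℕ) :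
    Q (l + 1) = projR qref (Q l) ∨ Q (l + 1) = projM (Q l) := by
  obtain ⟨k, rfl | rfl⟩ := Nat.even_or_odd' l
  exacts [Or.inl (hQodd k), Or.inr (hQeven k)]

lemma inPiN_and_pos_of_succ (href : ∀ ω, 0 < qref ω) (h0 : InPiN p0 p1 (Q 0))
    (h0pos : ∀ ω, 0 < Q 0 ω) (hstep : ∀ l, Q (l + 1) = projR qref (Q l) ∨ Q (l + 1) = projM (Q l)) :
    ∀ l, InPiN p0 p1 (Q l) ∧ ∀ ω, 0 < Q l ω
  | 0 => ⟨h0, h0pos⟩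
  | l + 1 => by
    obtain ⟨hl, hlpos⟩ := inPiN_and_pos_of_succ href h0 h0pos hstep l
    rcases hstep l with h | h <;> rw [h]
    exacts [⟨inPiN_projR href hl, projR_pos href hlpos⟩, ⟨inPiN_projM hl hlpos, projM_pos hlpos⟩]

lemma KLd_eq_KLd_succ_add (hstep : ∀ l, Q (l + 1) = projR qref (Q l) ∨ Q (l + 1) = projM (Q l))
    (href : ∀ ω, 0 < qref ω) (hpos : ∀ l ω, 0 < Q l ω) (hm : ∀ ω, 0 < m ω)
    (hmR : projR qref m = m) (hmM : IsMarkov m) (l : ℕ) :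
    KLd (Q l) m = KLd (Q l) (Q (l + 1)) + KLd (Q (l + 1)) m := by
  rcases hstep l with h | h <;> rw [h]
  exacts [KLd_eq_KLd_projR_add href (hpos l) hm hmR, KLd_eq_KLd_projM_add (hpos l) hm hmM]

lemma antitone_KLd (hstep : ∀ l, Q (l + 1) = projR qref (Q l) ∨ Q (l + 1) = projM (Q l))
    (href : ∀ ω, 0 < qref ω) (hQ : ∀ l, IsPMF (Q l)) (hpos : ∀ l ω, 0 < Q l ω)
    (hm : ∀ ω, 0 < m ω) (hmR : projR qref m = m) (hmM : IsMarkov m) :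
    Antitone fun l => KLd (Q l) m :=
  antitone_nat_of_succ_le fun l => by
    rw [KLd_eq_KLd_succ_add hstep href hpos hm hmR hmM l]
    linarith [KLd_nonneg (hQ l) (hQ (l + 1)).2 (hpos (l + 1))]

lemma tendsto_KLd_succ (hstep : ∀ l, Q (l + 1) = projR qref (Q l) ∨ Q (l + 1) = projM (Q l))
    (href : ∑ ω, qref ω = 1) (hrefpos : ∀ ω, 0 < qref ω) (hrefM : IsMarkov qref)
    (hQ : ∀ l, IsPMF (Q l)) (hpos : ∀ l ω, 0 < Q l ω) :
    Tendsto (fun l => KLd (Q l) (Q (l + 1))) atTop (𝓝 0) := by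
  have hanti := antitone_KLd hstep hrefpos hQ hpos hrefpos (projR_self hrefpos) hrefM
  have hlim := tendsto_atTop_ciInf hanti ⟨0, by
    rintro _ ⟨l, rfl⟩
    exact KLd_nonneg (hQ l) href hrefpos⟩
  have hdiff := hlim.sub (hlim.comp (tendsto_add_atTop_nat 1))
  rw [sub_self] at hdiff
  refine hdiff.congr fun l => ?_
  simp only [Function.comp_apply, KLd_eq_KLd_succ_add hstep hrefpos hpos hrefpos
    (projR_self hrefpos) hrefM l]
  ring

lemma exists_tendsto_subseq [Nonempty X] (hN : 1 ≤ N) (href : ∑ ω, qref ω = 1)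
    (hrefpos : ∀ ω, 0 < qref ω) (hp0 : ∀ x, 0 < p0 x) (hp1 : ∀ x, 0 < p1 x)
    (hQ : ∀ l, InPiN p0 p1 (Q l)) (hQodd : ∀ l, Q (2 * l + 1) = projR qref (Q (2 * l)))
    (hQeven : ∀ l, Q (2 * l + 2) = projM (Q (2 * l + 1))) :
    ∃ (a : Traj X N → ℝ) (ψ : ℕ → ℕ), Tendsto ψ atTop atTop ∧
      (∀ k, Q (ψ k + 1) = projR qref (Q (ψ k))) ∧ (∀ k, Q (ψ k + 2) = projM (Q (ψ k + 1))) ∧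
      Tendsto (fun k => Q (ψ k)) atTop (𝓝 a) ∧ InPiN p0 p1 a ∧ ∀ ω, 0 < a ω := by
  obtain ⟨δ, hδ, hle⟩ := exists_pos_le_projM_projR hN href hrefpos hp0 hp1
  have hmem : ∀ k, Q (2 * k + 2) ∈ Set.Icc (fun _ => δ) (fun _ => 1) := fun k =>
    ⟨fun ω => hQeven k ▸ hQodd k ▸ hle _ (hQ _) ω, fun ω => (hQ _).1.le_one ω⟩
  obtain ⟨a, ha, φ, hφ, hlim⟩ := isCompact_Icc.tendsto_subseq hmem
  refine ⟨a, fun k => 2 * φ k + 2, tendsto_atTop_mono (fun k => by omega) hφ.tendsto_atTop,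
    fun k => hQodd (φ k + 1), fun k => hQeven (φ k + 1), hlim,
    (isClosed_setOf_inPiN p0 p1).mem_of_tendsto hlim (Eventually.of_forall fun k => hQ _),
    fun ω => hδ.trans_le (ha.1 ω)⟩

lemma projR_eq_and_isMarkov_of_tendsto (href : ∀ ω, 0 < qref ω)
    (hgap : Tendsto (fun l => KLd (Q l) (Q (l + 1))) atTop (𝓝 0)) {ψ : ℕ → ℕ} {a : Traj X N → ℝ}
    (hψ : Tendsto ψ atTop atTop) (hψR : ∀ k, Q (ψ k + 1) = projR qref (Q (ψ k)))
    (hψM : ∀ k, Q (ψ k + 2) = projM (Q (ψ k + 1))) (hlim : Tendsto (fun k => Q (ψ k)) atTop (𝓝 a))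
    (ha : InPiN p0 p1 a) (hapos : ∀ ω, 0 < a ω) :
    projR qref a = a ∧ IsMarkov a := by
  have hR : projR qref a = a :=
    apply_eq_of_tendsto_KLd hlim (continuous_projR qref).continuousAt ha.1 hapos
      (inPiN_projR href ha).1.2 (projR_pos href hapos)
      ((hgap.comp hψ).congr fun k => by simp only [Function.comp_apply, hψR])
  have hlimR : Tendsto (fun k => Q (ψ k + 1)) atTop (𝓝 a) := by
    simpa only [hψR, hR, Function.comp_def] using ((continuous_projR qref).tendsto a).comp hlim
  have hM : projM a = a :=
    apply_eq_of_tendsto_KLd hlimR (continuousAt_projM hapos) ha.1 hapos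
      (inPiN_projM ha hapos).1.2 (projM_pos hapos)
      ((hgap.comp (tendsto_add_atTop_nat 1 |>.comp hψ)).congr fun k => by
        simp only [Function.comp_apply, hψM])
  exact ⟨hR, isMarkov_iff.2 hM⟩

end Iteration

theorem dimf_convergence_general
    {X : Type*} [Fintype X] [DecidableEq X] [Nonempty X] {N : ℕ} (hN : 1 ≤ N)
    (p0 p1 : X → ℝ) (hp0pos : ∀ x, 0 < p0 x)
    (hp1pos : ∀ x, 0 < p1 x)
    (qref : Traj X N → ℝ) (hqref : IsPMF qref) (hqrefpos : ∀ ω, 0 < qref ω)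
    (hqrefM : IsMarkov qref)
    (q0 : Traj X N → ℝ) (hq0 : InPiN p0 p1 q0) (hq0pos : ∀ ω, 0 < q0 ω)
    (Q : ℕ → Traj X N → ℝ) (hQ0 : Q 0 = q0)
    (hQodd : ∀ l : ℕ, Q (2 * l + 1) = projR qref (Q (2 * l)))
    (hQeven : ∀ l : ℕ, Q (2 * l + 2) = projM (Q (2 * l + 1)))
    (qs : Traj X N → ℝ)
    (hqsuniq : ∀ q : Traj X N → ℝ, InPiN p0 p1 q →
      (∀ q' : Traj X N → ℝ, InPiN p0 p1 q' → KLd q qref ≤ KLd q' qref) → q = qs) :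
    (∀ l : ℕ, InPiN p0 p1 (Q l)) ∧
    Filter.Tendsto (fun l : ℕ => KLd (Q l) qs) Filter.atTop (nhds 0) := by
  subst hQ0
  have hstep := succ_eq_projR_or_projM hQodd hQeven
  have hiter := inPiN_and_pos_of_succ hqrefpos hq0 hq0pos hstep
  have hpos : ∀ l ω, 0 < Q l ω := fun l => (hiter l).2
  refine ⟨fun l => (hiter l).1, ?_⟩
  obtain ⟨a, ψ, hψ, hψR, hψM, hlim, ha, hapos⟩ := exists_tendsto_subseq hN hqref.2 hqrefpos
    hp0pos hp1pos (fun l => (hiter l).1) hQodd hQeven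
  obtain ⟨hR, hM⟩ := projR_eq_and_isMarkov_of_tendsto hqrefpos
    (tendsto_KLd_succ hstep hqref.2 hqrefpos hqrefM (fun l => (hiter l).1.1) hpos)
    hψ hψR hψM hlim ha hapos
  obtain rfl : a = qs := hqsuniq a ha fun q hq =>
    KLd_le_KLd_of_isMarkov_of_projR_eq hN hqrefpos hqrefM ha.1.2 hapos hR hM hq.1
      (funext fun x => by rw [hq.2.1, ha.2.1]) (funext fun x => by rw [hq.2.2, ha.2.2])
  have hanti := antitone_KLd hstep hqrefpos (fun l => (hiter l).1.1) hpos hapos hR hM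
  refine (tendsto_iff_tendsto_subseq_of_antitone hanti hψ).2 ?_
  simpa only [KLd_self, Function.comp_def] using
    tendsto_KLd hlim tendsto_const_nhds (fun ω => (hapos ω).ne') (fun ω => (hapos ω).ne')

/-- Convergence of the D-IMF procedure on discrete spaces. Starting from
a full-support `q^0 ∈ Π_N(p_0, p_1)` and alternating reciprocal and Markovian projections,
every iterate stays in `Π_N(p_0, p_1)` and `KL(q^l ‖ q*) → 0`, where `q*` is the unique
minimizer of `KL(· ‖ q^ref)` over `Π_N(p_0, p_1)`. -/
theorem dimf_convergence
    {X : Type*} [Fintype X] [DecidableEq X] [Nonempty X] {N : ℕ} (hN : 1 ≤ N)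
    (p0 p1 : X → ℝ) (hp0 : IsPMF p0) (hp0pos : ∀ x, 0 < p0 x)
    (hp1 : IsPMF p1) (hp1pos : ∀ x, 0 < p1 x)
    (qref : Traj X N → ℝ) (hqref : IsPMF qref) (hqrefpos : ∀ ω, 0 < qref ω)
    (hqrefM : IsMarkov qref)
    (q0 : Traj X N → ℝ) (hq0 : InPiN p0 p1 q0) (hq0pos : ∀ ω, 0 < q0 ω)
    (Q : ℕ → Traj X N → ℝ) (hQ0 : Q 0 = q0)
    (hQodd : ∀ l : ℕ, Q (2 * l + 1) = projR qref (Q (2 * l)))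
    (hQeven : ∀ l : ℕ, Q (2 * l + 2) = projM (Q (2 * l + 1)))
    (qs : Traj X N → ℝ) (hqs : InPiN p0 p1 qs)
    (hqsmin : ∀ q : Traj X N → ℝ, InPiN p0 p1 q → KLd qs qref ≤ KLd q qref)
    (hqsuniq : ∀ q : Traj X N → ℝ, InPiN p0 p1 q →
      (∀ q' : Traj X N → ℝ, InPiN p0 p1 q' → KLd q qref ≤ KLd q' qref) → q = qs) :
    (∀ l : ℕ, InPiN p0 p1 (Q l)) ∧
    Filter.Tendsto (fun l : ℕ => KLd (Q l) qs) Filter.atTop (nhds 0) :=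
  dimf_convergence_general hN p0 p1 hp0pos hp1pos qref hqref hqrefpos hqrefM q0 hq0 hq0pos Q hQ0
    hQodd hQeven qs hqsuniq
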